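/- arXiv:2203.04380 — 4 statements merged into one kernel-verified Lean document; each statement's English description precedes it below -/
import Mathlib

section
/- For every real t > 0, the function (x₁,x₂) ↦ x₂·e^{−t(2x₁+x₂)} is integrable on P with respect to Lebesgue measure on ℝ², and ∫_P x₂·e^{−t(2x₁+x₂)} d(x₁,x₂) = 0. -/
/-!
The affine involution `σ(x₁, x₂) = (x₁ + x₂, −x₂)`, a shear followed by a reflection, preserves
Lebesgue measure and maps `P` onto itself. The weight `2x₁ + x₂` is `σ`-invariant while `x₂`
changes sign, so the integrand is odd under `σ` and its integral over `P` equals its own negative.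
Integrability holds because `P ⊆ [−1, ∞) × [−1, 1]`, on which the integrand factors as
`e^{−2t x₁}` times a continuous function of `x₂`.
-/

open MeasureTheory

def momentPolytope : Set (ℝ × ℝ) :=
  {p | -1 ≤ p.1 ∧ -1 ≤ p.2 ∧ p.2 ≤ 1 ∧ -1 ≤ p.1 + p.2}

theorem setIntegral_eq_zero_of_comp_eq_neg {α E : Type*} [MeasurableSpace α]
    [NormedAddCommGroup E] [NormedSpace ℝ E] {μ : Measure α} (e : α ≃ᵐ α)
    (he : MeasurePreserving e μ μ) {s : Set α} (hs : e ⁻¹' s = s) {f : α → E}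
    (hf : ∀ x, f (e x) = -f x) : ∫ x in s, f x ∂μ = 0 := by
  have h := he.setIntegral_preimage_emb e.measurableEmbedding f s
  simp only [hs, hf, integral_neg] at h
  have h_two : (2 : ℝ) • ∫ x in s, f x ∂μ = 0 := by
    rw [two_smul]; nth_rw 1 [← h]; exact neg_add_cancel _
  exact (smul_eq_zero.1 h_two).resolve_left two_ne_zero

theorem integrableOn_prod_mul {α β L : Type*} [MeasurableSpace α] [MeasurableSpace β]
    [NormedRing L] {μ : Measure α} {ν : Measure β} [SFinite μ] [SFinite ν] {f : α → L}
    {g : β → L} {s : Set α} {t : Set β} (hf : IntegrableOn f s μ) (hg : IntegrableOn g t ν) :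
    IntegrableOn (fun p : α × β => f p.1 * g p.2) (s ×ˢ t) (μ.prod ν) := by
  rw [IntegrableOn, ← Measure.prod_restrict]
  exact hf.mul_prod hg

theorem momentPolytope_subset_Ici_prod_Icc :
    momentPolytope ⊆ Set.Ici (-1) ×ˢ Set.Icc (-1) 1 :=
  fun _ ⟨h₁, h₂, h₃, _⟩ => ⟨h₁, h₂, h₃⟩

def momentPolytopeInvolution : (ℝ × ℝ) ≃ᵐ (ℝ × ℝ) :=
  MeasurableEquiv.ofInvolutive (fun p => (p.1 + p.2, -p.2)) (fun p => by simp) (by fun_prop)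

theorem momentPolytopeInvolution_apply (p : ℝ × ℝ) :
    momentPolytopeInvolution p = (p.1 + p.2, -p.2) :=
  rfl

theorem measurePreserving_momentPolytopeInvolution :
    MeasurePreserving momentPolytopeInvolution volume volume :=
  ((MeasurePreserving.id volume).prod (Measure.measurePreserving_neg volume)).comp
    (measurePreserving_add_prod volume volume)

theorem preimage_momentPolytopeInvolution :
    momentPolytopeInvolution ⁻¹' momentPolytope = momentPolytope := by
  ext ⟨x, y⟩
  simp only [Set.mem_preimage, momentPolytopeInvolution_apply, momentPolytope,
    Set.mem_ofPred_eq]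
  constructor <;> rintro ⟨h₁, h₂, h₃, h₄⟩ <;> refine ⟨?_, ?_, ?_, ?_⟩ <;> linarith

/-- For every `t > 0`, the function `(x₁,x₂) ↦ x₂·e^{−t(2x₁+x₂)}` is integrable on `P`
with respect to Lebesgue measure on `ℝ²`, and its integral over `P` vanishes. -/
theorem stmt_3 (t : ℝ) (ht : 0 < t) :
    IntegrableOn (fun p : ℝ × ℝ => p.2 * Real.exp (-(t * (2 * p.1 + p.2))))
      momentPolytope volume ∧
    (∫ p in momentPolytope, p.2 * Real.exp (-(t * (2 * p.1 + p.2)))) = 0 := by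
  constructor
  · have h_split : (fun p : ℝ × ℝ => p.2 * Real.exp (-(t * (2 * p.1 + p.2)))) =
        fun p => Real.exp (-(2 * t) * p.1) * (p.2 * Real.exp (-(t * p.2))) := by
      ext p
      rw [mul_left_comm, ← Real.exp_add]
      ring_nf
    have h_exp : IntegrableOn (fun x => Real.exp (-(2 * t) * x)) (Set.Ici (-1)) :=
      (integrableOn_Ici_iff_integrableOn_Ioi (f := _)).2
        (exp_neg_integrableOn_Ioi _ (by positivity))
    have h_bdd : IntegrableOn (fun y => y * Real.exp (-(t * y))) (Set.Icc (-1) 1) :=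
      (by fun_prop : Continuous fun y : ℝ => y * Real.exp (-(t * y))).integrableOn_Icc
    rw [h_split]
    exact (integrableOn_prod_mul h_exp h_bdd).mono_set momentPolytope_subset_Ici_prod_Icc
  · refine setIntegral_eq_zero_of_comp_eq_neg momentPolytopeInvolution
      measurePreserving_momentPolytopeInvolution preimage_momentPolytopeInvolution fun p => ?_
    rw [momentPolytopeInvolution_apply]
    ring_nf
end

section
/- For every real t > 0, the function (x₁,x₂) ↦ x₁·e^{−t(2x₁+x₂)} is integrable on P with respect to Lebesgue measure on ℝ², and ∫_P x₁·e^{−t(2x₁+x₂)} d(x₁,x₂) = e^t·(2e^t(1−t) − (2−t)) / (2t³). In particular this integral vanishes if and only if 2e^t(1−t) = 2−t. -/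
/-!
Integrate first in `x₁`. The fibre of `P` over `x₂ ∈ [-1, 1]` is the half-line
`x₁ ≥ max (-1) (-1 - x₂)`, and with `c = -2t` the function `x₁ e^{c x₁}` has the primitive
`e^{c x₁} (x₁ / c - 1 / c²)`, which vanishes at infinity. What is left is an integral over
`[-1, 0]` and `[0, 1]` of an affine function times `e^{± t x₂}`, again with an explicit primitive.
-/

open MeasureTheory Real Set Filter Topology

section AffineTimesExp

variable {c : ℝ}

theorem hasDerivAt_exp_mul_mul_affine (hc : c ≠ 0) (p q y : ℝ) :
    HasDerivAt (fun y => exp (c * y) * ((p + q * y) / c - q / c ^ 2))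
      ((p + q * y) * exp (c * y)) y := by
  have hexp : HasDerivAt (fun y => exp (c * y)) (exp (c * y) * c) y :=
    ((hasDerivAt_id y).const_mul c).exp.congr_deriv (by simp [mul_comm])
  have haff : HasDerivAt (fun y => (p + q * y) / c - q / c ^ 2) (q / c) y :=
    ((((hasDerivAt_id y).const_mul q).const_add p).div_const c).sub_const _ |>.congr_deriv
      (by simp)
  refine (hexp.mul haff).congr_deriv ?_
  field_simp
  ring

theorem integral_affine_mul_exp (hc : c ≠ 0) (p q a b : ℝ) :
    ∫ y in a..b, (p + q * y) * exp (c * y) =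
      exp (c * b) * ((p + q * b) / c - q / c ^ 2) - exp (c * a) * ((p + q * a) / c - q / c ^ 2) :=
  intervalIntegral.integral_eq_sub_of_hasDerivAt
    (fun y _ => hasDerivAt_exp_mul_mul_affine hc p q y)
    (Continuous.intervalIntegrable (by fun_prop) _ _)

theorem tendsto_mul_exp_mul_atTop_nhds_zero (hc : c < 0) :
    Tendsto (fun x => x * exp (c * x)) atTop (𝓝 0) := by
  simpa using tendsto_rpow_mul_exp_neg_mul_atTop_nhds_zero 1 (-c) (neg_pos.2 hc)

theorem integrableOn_Ioi_mul_exp_mul (hc : c < 0) (a : ℝ) :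
    IntegrableOn (fun x => x * exp (c * x)) (Ioi a) := by
  refine integrable_of_isBigO_exp_neg (b := -(c / 2)) (by linarith) (by fun_prop) ?_
  have hbdd := (tendsto_mul_exp_mul_atTop_nhds_zero (c := c / 2) (by linarith)).isBigO_one ℝ
  refine (hbdd.mul (Asymptotics.isBigO_refl (fun x => exp (c / 2 * x)) atTop)).congr
    (fun x => ?_) (fun x => by simp)
  rw [mul_assoc, ← exp_add]
  ring_nf

theorem integral_Ioi_mul_exp_mul (hc : c < 0) (a : ℝ) :
    ∫ x in Ioi a, x * exp (c * x) = exp (c * a) * (1 / c ^ 2 - a / c) := by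
  have hprim (x : ℝ) : HasDerivAt (fun x => exp (c * x) * (x / c - 1 / c ^ 2))
      (x * exp (c * x)) x := by
    simpa using hasDerivAt_exp_mul_mul_affine hc.ne 0 1 x
  have hlim : Tendsto (fun x => exp (c * x) * (x / c - 1 / c ^ 2)) atTop (𝓝 0) := by
    have hexp : Tendsto (fun x => exp (c * x)) atTop (𝓝 0) :=
      tendsto_exp_atBot.comp (tendsto_id.const_mul_atTop_of_neg hc)
    have := ((tendsto_mul_exp_mul_atTop_nhds_zero hc).div_const c).sub
      (hexp.mul_const (1 / c ^ 2))
    simp only [zero_div, zero_mul, sub_zero] at this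
    refine this.congr fun x => ?_
    ring
  rw [integral_Ioi_of_hasDerivAt_of_tendsto' (fun x _ => hprim x)
    (integrableOn_Ioi_mul_exp_mul hc a) hlim]
  ring

end AffineTimesExp

theorem setIntegral_prod_eq_integral_fiber {α β E : Type*} [MeasurableSpace α] [MeasurableSpace β]
    [NormedAddCommGroup E] [NormedSpace ℝ E] {μ : Measure α} {ν : Measure β} [SFinite μ]
    [SFinite ν] {f : α × β → E} {s : Set (α × β)} {I : Set β} {t : β → Set α}
    (hs : MeasurableSet s) (hI : MeasurableSet I) (hfib : ∀ x y, (x, y) ∈ s ↔ y ∈ I ∧ x ∈ t y)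
    (hf : IntegrableOn f s (μ.prod ν)) :
    ∫ p in s, f p ∂(μ.prod ν) = ∫ y in I, ∫ x in t y, f (x, y) ∂μ ∂ν := by
  rw [← integral_indicator hs, integral_prod_symm _ ((integrable_indicator_iff hs).2 hf),
    ← integral_indicator hI]
  congr 1
  ext y
  by_cases hy : y ∈ I
  · have hfiber : t y = (fun x => (x, y)) ⁻¹' s := by
      ext x
      simp [hfib, hy]
    rw [indicator_of_mem hy, ← integral_indicator (hfiber ▸ measurable_prodMk_right hs)]
    congr 1
    ext x
    by_cases hx : x ∈ t y <;> simp [hfib, hy, hx]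
  · simp [hfib, hy]

theorem measurableSet_momentPolytope : MeasurableSet momentPolytope := by
  unfold momentPolytope
  measurability

theorem mk_mem_momentPolytope_iff (x y : ℝ) :
    (x, y) ∈ momentPolytope ↔ y ∈ Icc (-1) 1 ∧ x ∈ Ici (max (-1) (-1 - y)) := by
  simp only [momentPolytope, mem_ofPred_eq, mem_Icc, mem_Ici, max_le_iff]
  constructor
  · rintro ⟨hx, hy₁, hy₂, hxy⟩
    exact ⟨⟨hy₁, hy₂⟩, hx, by linarith⟩
  · rintro ⟨⟨hy₁, hy₂⟩, hx, hxy⟩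
    exact ⟨hx, hy₁, hy₂, by linarith⟩

theorem momentPolytope_subset_prod : momentPolytope ⊆ Ici (-1) ×ˢ Icc (-1) 1 :=
  fun _ hp => ⟨hp.1, hp.2.1, hp.2.2.1⟩

theorem mul_exp_neg_mul_two_mul_add_eq (t x y : ℝ) :
    x * exp (-(t * (2 * x + y))) = x * exp (-(2 * t) * x) * exp (-t * y) := by
  rw [mul_assoc, ← exp_add]
  ring_nf

theorem integrableOn_momentPolytope {t : ℝ} (ht : 0 < t) :
    IntegrableOn (fun p : ℝ × ℝ => p.1 * exp (-(t * (2 * p.1 + p.2)))) momentPolytope := by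
  have hx : IntegrableOn (fun x => x * exp (-(2 * t) * x)) (Ici (-1)) :=
    (integrableOn_Ici_iff_integrableOn_Ioi).2 (integrableOn_Ioi_mul_exp_mul (by linarith) _)
  have hy : IntegrableOn (fun y => exp (-t * y)) (Icc (-1) 1) :=
    Continuous.integrableOn_Icc (by fun_prop)
  refine IntegrableOn.mono_set ?_ momentPolytope_subset_prod
  simp only [mul_exp_neg_mul_two_mul_add_eq]
  rw [IntegrableOn, Measure.volume_eq_prod, ← Measure.prod_restrict]
  exact hx.mul_prod hy

theorem integral_momentPolytope_eq_integral_Icc {t : ℝ} (ht : 0 < t) :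
    ∫ p in momentPolytope, p.1 * exp (-(t * (2 * p.1 + p.2))) =
      ∫ y in Icc (-1) 1, exp (-t * y) * (exp (-(2 * t) * max (-1) (-1 - y)) *
        (1 / (4 * t ^ 2) + max (-1) (-1 - y) / (2 * t))) := by
  rw [Measure.volume_eq_prod, setIntegral_prod_eq_integral_fiber measurableSet_momentPolytope
    measurableSet_Icc mk_mem_momentPolytope_iff (integrableOn_momentPolytope ht)]
  refine setIntegral_congr_fun measurableSet_Icc fun y _ => ?_
  simp only [mul_exp_neg_mul_two_mul_add_eq, mul_comm _ (exp (-t * y)), integral_const_mul,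
    integral_Ici_eq_integral_Ioi, integral_Ioi_mul_exp_mul (by linarith : -(2 * t) < 0)]
  ring

theorem integral_Icc_momentPolytope_fiber {t : ℝ} (ht : 0 < t) :
    ∫ y in Icc (-1) 1, exp (-t * y) * (exp (-(2 * t) * max (-1) (-1 - y)) *
        (1 / (4 * t ^ 2) + max (-1) (-1 - y) / (2 * t))) =
      exp t * (2 * exp t * (1 - t) - (2 - t)) / (2 * t ^ 3) := by
  set g : ℝ → ℝ := fun y => exp (-t * y) * (exp (-(2 * t) * max (-1) (-1 - y)) *
    (1 / (4 * t ^ 2) + max (-1) (-1 - y) / (2 * t)))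
  have hg : Continuous g := by fun_prop
  have hleft : ∫ y in (-1)..0, g y = ∫ y in (-1)..0,
      (exp (2 * t) * (1 / (4 * t ^ 2) - 1 / (2 * t)) + (-exp (2 * t) / (2 * t)) * y) *
        exp (t * y) := by
    refine intervalIntegral.integral_congr fun y hy => ?_
    rw [uIcc_of_le (by norm_num)] at hy
    have hmax : max (-1) (-1 - y) = -1 - y := max_eq_right (by linarith [hy.2])
    have hexp : exp (-t * y) * exp (-(2 * t) * (-1 - y)) = exp (2 * t) * exp (t * y) := by
      rw [← exp_add, ← exp_add]
      ring_nf
    simp only [g, hmax, ← mul_assoc, hexp]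
    field_simp
    ring
  have hright : ∫ y in 0..1, g y = ∫ y in 0..1,
      (exp (2 * t) * (1 / (4 * t ^ 2) - 1 / (2 * t)) + 0 * y) * exp (-t * y) := by
    refine intervalIntegral.integral_congr fun y hy => ?_
    rw [uIcc_of_le (by norm_num)] at hy
    have hmax : max (-1) (-1 - y) = -1 := max_eq_left (by linarith [hy.1])
    simp only [g, hmax]
    field_simp
    ring
  rw [integral_Icc_eq_integral_Ioc, ← intervalIntegral.integral_of_le (by norm_num),
    ← intervalIntegral.integral_add_adjacent_intervals (hg.intervalIntegrable _ 0)
      (hg.intervalIntegrable 0 _), hleft, hright, integral_affine_mul_exp ht.ne',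
    integral_affine_mul_exp (neg_ne_zero.2 ht.ne')]
  have hexp_two : exp (2 * t) = exp t * exp t := by rw [← exp_add, two_mul]
  simp only [mul_zero, mul_neg, mul_one, exp_zero, hexp_two, exp_neg]
  field_simp
  ring

/-- For every `t > 0`, the function `(x₁,x₂) ↦ x₁·e^{−t(2x₁+x₂)}` is integrable on `P`
with respect to Lebesgue measure on `ℝ²`, its integral equals
`e^t·(2e^t(1−t) − (2−t)) / (2t³)`, and in particular the integral vanishes if and only if
`2e^t(1−t) = 2−t`. -/
theorem stmt_4 (t : ℝ) (ht : 0 < t) :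
    IntegrableOn (fun p : ℝ × ℝ => p.1 * Real.exp (-(t * (2 * p.1 + p.2))))
      momentPolytope volume ∧
    (∫ p in momentPolytope, p.1 * Real.exp (-(t * (2 * p.1 + p.2)))) =
      Real.exp t * (2 * Real.exp t * (1 - t) - (2 - t)) / (2 * t ^ 3) ∧
    ((∫ p in momentPolytope, p.1 * Real.exp (-(t * (2 * p.1 + p.2)))) = 0 ↔
      2 * Real.exp t * (1 - t) = 2 - t) := by
  have hvalue := (integral_momentPolytope_eq_integral_Icc ht).trans
    (integral_Icc_momentPolytope_fiber ht)
  refine ⟨integrableOn_momentPolytope ht, hvalue, ?_⟩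
  rw [hvalue, div_eq_zero_iff, mul_eq_zero, sub_eq_zero]
  simp [exp_ne_zero, ht.ne']
end

section
/- Let ν₁,…,ν_r ∈ ℝⁿ and c₁,…,c_r ∈ ℝ, let P = ⋂_{i=1}^{r} {x ∈ ℝⁿ : ⟨νᵢ, x⟩ ≥ cᵢ} and C = ⋂_{i=1}^{r} {x ∈ ℝⁿ : ⟨νᵢ, x⟩ ≥ 0}, and let v lie in the topological interior of the dual cone C^∨ = {y ∈ ℝⁿ : ⟨y, x⟩ ≥ 0 for all x ∈ C}. Then the set Q = {x ∈ P : ⟨v, x⟩ ≤ 0} is compact. -/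
/-!
Since `v` is interior to the dual cone, `⟪v, u⟫ ≥ ε ‖u‖` on `C`, so no nonzero direction `u`
satisfies both `⟪νᵢ, u⟫ ≥ 0` for all `i` and `⟪v, u⟫ ≤ 0`: the recession cone of `Q` is trivial.
Quantitatively, the continuous positively homogeneous function
`f x = max ⟪v, x⟫ (∑ᵢ max 0 (-⟪νᵢ, x⟫))` is positive off the origin, hence `f x ≥ δ ‖x‖` by
compactness of the unit sphere, while on `Q` it is bounded by `∑ᵢ max 0 (-cᵢ)`. So `Q` is bounded,
and being closed it is compact.
-/

open scoped RealInnerProductSpace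

section Homogeneous

variable {E : Type*} [NormedAddCommGroup E] [NormedSpace ℝ E] [ProperSpace E]

theorem exists_pos_mul_norm_le_of_posHomogeneous {f : E → ℝ} (hf : Continuous f)
    (hhom : ∀ t : ℝ, 0 ≤ t → ∀ x, f (t • x) = t * f x) (hpos : ∀ x ≠ 0, 0 < f x) :
    ∃ δ > 0, ∀ x, δ * ‖x‖ ≤ f x := by
  have hf0 : f 0 = 0 := by simpa using hhom 0 le_rfl 0
  cases subsingleton_or_nontrivial E
  · exact ⟨1, one_pos, fun x => by simp [Subsingleton.elim x 0, hf0]⟩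
  obtain ⟨u, hu, hmin⟩ := (isCompact_sphere (0 : E) 1).exists_isMinOn
    (NormedSpace.sphere_nonempty.mpr zero_le_one) hf.continuousOn
  have hu0 : u ≠ 0 := ne_zero_of_mem_unit_sphere ⟨u, hu⟩
  refine ⟨f u, hpos u hu0, fun x => ?_⟩
  rcases eq_or_ne x 0 with rfl | hx
  · simp [hf0]
  have hxs : ‖x‖⁻¹ • x ∈ Metric.sphere (0 : E) 1 := by
    simpa using norm_smul_inv_norm (𝕜 := ℝ) hx
  calc f u * ‖x‖ ≤ f (‖x‖⁻¹ • x) * ‖x‖ := by gcongr; exact hmin hxs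
    _ = f x := by
      rw [mul_comm, ← hhom _ (norm_nonneg x), smul_smul, mul_inv_cancel₀ (norm_ne_zero_iff.mpr hx),
        one_smul]

end Homogeneous

section InnerProduct

variable {E : Type*} [NormedAddCommGroup E] [InnerProductSpace ℝ E]

theorem exists_pos_mul_norm_le_inner_of_mem_interior_dual {C : Set E} {v : E}
    (hv : v ∈ interior {y : E | ∀ x ∈ C, 0 ≤ ⟪y, x⟫}) :
    ∃ ε > 0, ∀ u ∈ C, ε * ‖u‖ ≤ ⟪v, u⟫ := by
  obtain ⟨ε, hε, hball⟩ := Metric.nhds_basis_closedBall.mem_iff.mp (mem_interior_iff_mem_nhds.mp hv)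
  refine ⟨ε, hε, fun u hu => ?_⟩
  rcases eq_or_ne u 0 with rfl | hu0
  · simp
  have hnorm : 0 < ‖u‖ := norm_pos_iff.mpr hu0
  -- test the dual-cone inequality at the point of the ball pushed away from `u`
  have hw : v - (ε / ‖u‖) • u ∈ Metric.closedBall v ε := by
    rw [mem_closedBall_iff_norm, sub_sub_cancel_left, norm_neg, norm_smul, Real.norm_of_nonneg
      (by positivity), div_mul_cancel₀ _ hnorm.ne']
  have h := hball hw u hu
  rw [inner_sub_left, real_inner_smul_left, real_inner_self_eq_norm_mul_norm,
    ← mul_assoc, div_mul_cancel₀ _ hnorm.ne'] at h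
  linarith

variable {ι : Type*} [Fintype ι] (v : E) (ν : ι → E)

noncomputable def recessionExcess (x : E) : ℝ :=
  max ⟪v, x⟫ (∑ i, max 0 (-⟪ν i, x⟫))

theorem continuous_recessionExcess : Continuous (recessionExcess v ν) := by
  unfold recessionExcess
  fun_prop

theorem recessionExcess_smul {t : ℝ} (ht : 0 ≤ t) (x : E) :
    recessionExcess v ν (t • x) = t * recessionExcess v ν x := by
  simp only [recessionExcess, real_inner_smul_right, mul_max_of_nonneg _ _ ht, Finset.mul_sum,
    mul_zero, mul_neg]

theorem recessionExcess_pos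
    (hv : ∀ u : E, (∀ i, 0 ≤ ⟪ν i, u⟫) → ⟪v, u⟫ ≤ 0 → u = 0) {x : E} (hx : x ≠ 0) :
    0 < recessionExcess v ν x := by
  by_contra! hle
  obtain ⟨hvx, hsum⟩ := max_le_iff.mp hle
  refine hx (hv x (fun i => ?_) hvx)
  have := (Finset.single_le_sum (fun j _ => le_max_left 0 (-⟪ν j, x⟫))
    (Finset.mem_univ i)).trans hsum
  linarith [le_max_right 0 (-⟪ν i, x⟫)]

theorem recessionExcess_le {c : ι → ℝ} {x : E} (hc : ∀ i, c i ≤ ⟪ν i, x⟫) (hvx : ⟪v, x⟫ ≤ 0) :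
    recessionExcess v ν x ≤ ∑ i, max 0 (-c i) := by
  have hmono : ∑ i, max 0 (-⟪ν i, x⟫) ≤ ∑ i, max 0 (-c i) :=
    Finset.sum_le_sum fun i _ => max_le_max le_rfl (neg_le_neg (hc i))
  exact max_le (hvx.trans ((Finset.sum_nonneg fun i _ => le_max_left _ _).trans hmono)) hmono

end InnerProduct

/-- Let `P = ⋂ᵢ {x : ⟪νᵢ,x⟫ ≥ cᵢ}` be a polyhedron in `ℝⁿ` with asymptotic cone
`C = ⋂ᵢ {x : ⟪νᵢ,x⟫ ≥ 0}`, and let `v` lie in the interior of the dual cone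
`C^∨ = {y : ⟪y,x⟫ ≥ 0 for all x ∈ C}`. Then `Q = {x ∈ P : ⟪v,x⟫ ≤ 0}` is compact. -/
theorem stmt_11 (n r : ℕ) (ν : Fin r → EuclideanSpace ℝ (Fin n)) (c : Fin r → ℝ)
    (P C : Set (EuclideanSpace ℝ (Fin n)))
    (hP : P = ⋂ i, {x : EuclideanSpace ℝ (Fin n) | c i ≤ ⟪ν i, x⟫})
    (hC : C = ⋂ i, {x : EuclideanSpace ℝ (Fin n) | 0 ≤ ⟪ν i, x⟫})
    (v : EuclideanSpace ℝ (Fin n))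
    (hv : v ∈ interior {y : EuclideanSpace ℝ (Fin n) | ∀ x ∈ C, 0 ≤ ⟪y, x⟫}) :
    IsCompact {x ∈ P | ⟪v, x⟫ ≤ 0} := by
  subst hP hC
  obtain ⟨ε, hε, hεv⟩ := exists_pos_mul_norm_le_inner_of_mem_interior_dual hv
  have hrec : ∀ u, (∀ i, 0 ≤ ⟪ν i, u⟫) → ⟪v, u⟫ ≤ 0 → u = 0 := fun u hu hvu =>
    norm_le_zero_iff.mp <| nonpos_of_mul_nonpos_right
      ((hεv u (Set.mem_iInter.mpr hu)).trans hvu) hε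
  obtain ⟨δ, hδ, hδf⟩ := exists_pos_mul_norm_le_of_posHomogeneous (continuous_recessionExcess v ν)
    (fun t ht => recessionExcess_smul v ν ht) (fun x => recessionExcess_pos v ν hrec)
  have hbdd : Bornology.IsBounded {x ∈ ⋂ i, {x | c i ≤ ⟪ν i, x⟫} | ⟪v, x⟫ ≤ 0} := by
    refine isBounded_iff_forall_norm_le.mpr ⟨(∑ i, max 0 (-c i)) / δ, fun x ⟨hxP, hvx⟩ => ?_⟩
    rw [le_div_iff₀ hδ, mul_comm]
    exact (hδf x).trans (recessionExcess_le v ν (Set.mem_iInter.mp hxP) hvx)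
  have hclosed : IsClosed ((⋂ i, {x | c i ≤ ⟪ν i, x⟫}) ∩ {x | ⟪v, x⟫ ≤ 0}) :=
    (isClosed_iInter fun i =>
      isClosed_le continuous_const (continuous_const.inner continuous_id)).inter
      (isClosed_le (continuous_const.inner continuous_id) continuous_const)
  exact Metric.isCompact_of_isClosed_isBounded hclosed hbdd
end

section
/- Let ν₁,…,ν_r ∈ ℝⁿ and c₁,…,c_r ∈ ℝ, let P = ⋂_{i=1}^{r} {x ∈ ℝⁿ : ⟨νᵢ, x⟩ ≥ cᵢ} and C = ⋂_{i=1}^{r} {x ∈ ℝⁿ : ⟨νᵢ, x⟩ ≥ 0}, assume 0 lies in the topological interior of P, and let Λ denote the topological interior of the dual cone C^∨ = {y ∈ ℝⁿ : ⟨y, x⟩ ≥ 0 for all x ∈ C}. Then the function F : Λ → ℝ defined by F(v) = ∫_P e^{−⟨v,x⟩} dx (Lebesgue measure on ℝⁿ) is a proper map: it is continuous and the preimage under F of every compact subset of ℝ is compact in Λ. -/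
/-!
For `v` in the interior `Λ` of the dual cone, `⟪v, ·⟫` grows linearly on the cone `C`, and by
compactness of the unit sphere also on `P` up to an additive constant; this gives integrability
and, by dominated convergence, continuity of `F` on `Λ`.

For properness consider the weighted volume `L v = ∫⁻ x in P, e^{-⟪v, x⟫}` on all of `ℝⁿ`. By
Fatou's lemma it is lower semicontinuous. It is infinite off `Λ`: then some unit vector `u ∈ C`
has `⟪v, u⟫ ≤ 0`, and `P` contains infinitely many disjoint balls along the ray `ℝ₊ u`, on which
the integrand is bounded below. Since a ball `B(0, ε)` lies in `P`, `L v` is at least a positive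
multiple of `e^{ε ‖v‖ / 4}`, so the sublevel sets of `L` are bounded. Hence, for an upper bound
`b` of `K`, `{L ≤ b}` is a compact subset of `Λ` in which `F⁻¹ K` is closed.
-/

open MeasureTheory Metric Filter Topology
open scoped RealInnerProductSpace ENNReal

lemma one_add_pow_le_mul_exp {a : ℝ} (ha : 0 < a) {m : ℕ} (hm : 0 < m) {t : ℝ} (ht : 0 ≤ t) :
    (1 + t) ^ m ≤ max 1 (m / a) ^ m * Real.exp (a * t) := by
  set K := max 1 ((m : ℝ) / a)
  have hm' : (0 : ℝ) < m := by exact_mod_cast hm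
  have hlin : 1 + t ≤ K * (1 + a / m * t) := by
    have h1 : (1 : ℝ) ≤ K := le_max_left _ _
    have h2 : (m : ℝ) / a * (a / m * t) = t := by field_simp
    have h3 : (m : ℝ) / a * (a / m * t) ≤ K * (a / m * t) :=
      mul_le_mul_of_nonneg_right (le_max_right _ _) (by positivity)
    nlinarith
  calc (1 + t) ^ m ≤ (K * Real.exp (a / m * t)) ^ m := by
        gcongr
        exact hlin.trans (mul_le_mul_of_nonneg_left
          (by linarith [Real.add_one_le_exp (a / m * t)]) (by positivity))
    _ = K ^ m * Real.exp (a * t) := by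
        rw [mul_pow, ← Real.exp_nat_mul]
        congr 2
        field_simp

section FiniteDimensional

variable {E : Type*} [NormedAddCommGroup E] [InnerProductSpace ℝ E] [FiniteDimensional ℝ E]
  [MeasurableSpace E] [BorelSpace E] (μ : Measure E) [μ.IsAddHaarMeasure]

lemma integrable_exp_neg_mul_norm {a : ℝ} (ha : 0 < a) :
    Integrable (fun x : E => Real.exp (-(a * ‖x‖))) μ := by
  set m := Module.finrank ℝ E + 1
  refine ((integrable_one_add_norm (μ := μ) (r := m) (by simp [m])).const_mul
    (max 1 (m / a) ^ m)).mono' (by fun_prop) (ae_of_all _ fun x => ?_)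
  have hpos : 0 < (1 + ‖x‖) ^ m := by positivity
  rw [Real.norm_of_nonneg (Real.exp_pos _).le, Real.rpow_neg (by positivity), Real.rpow_natCast,
    ← div_eq_mul_inv, le_div_iff₀ hpos, Real.exp_neg, inv_mul_le_iff₀ (Real.exp_pos _),
    mul_comm (Real.exp _)]
  exact one_add_pow_le_mul_exp ha (Nat.succ_pos _) (norm_nonneg x)

end FiniteDimensional

section DualCone

variable {E : Type*} [NormedAddCommGroup E] [InnerProductSpace ℝ E]

lemma norm_exp_neg_inner_le {v x : E} {δ M : ℝ} (h : δ * ‖x‖ - M ≤ ⟪v, x⟫) :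
    ‖Real.exp (-⟪v, x⟫)‖ ≤ Real.exp M * Real.exp (-(δ * ‖x‖)) := by
  rw [Real.norm_of_nonneg (Real.exp_pos _).le, ← Real.exp_add, Real.exp_le_exp]
  linarith

lemma mem_interior_dual_iff {C : Set E} {v : E} :
    v ∈ interior {y : E | ∀ x ∈ C, 0 ≤ ⟪y, x⟫} ↔ ∃ ρ > 0, ∀ x ∈ C, ρ * ‖x‖ ≤ ⟪v, x⟫ := by
  constructor
  · intro hv
    obtain ⟨ρ, hρ, hball⟩ := Metric.mem_nhds_iff.mp (mem_interior_iff_mem_nhds.mp hv)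
    refine ⟨ρ / 2, by positivity, fun x hx => ?_⟩
    rcases eq_or_ne x 0 with rfl | hx0
    · simp
    have hxpos := norm_pos_iff.mpr hx0
    have hw : v - (ρ / 2 / ‖x‖) • x ∈ ball v ρ := by
      rw [mem_ball_iff_norm, sub_sub_cancel_left, norm_neg, norm_smul, Real.norm_eq_abs,
        abs_of_pos (by positivity), div_mul_cancel₀ _ hxpos.ne']
      linarith
    have h := hball hw x hx
    rw [inner_sub_left, real_inner_smul_left, real_inner_self_eq_norm_mul_norm] at h
    have : ρ / 2 / ‖x‖ * (‖x‖ * ‖x‖) = ρ / 2 * ‖x‖ := by field_simp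
    linarith
  · rintro ⟨ρ, hρ, hv⟩
    refine mem_interior.mpr ⟨ball v ρ, fun w hw x hx => ?_, isOpen_ball, mem_ball_self hρ⟩
    have h1 := real_inner_le_norm (v - w) x
    have h2 : ‖v - w‖ * ‖x‖ ≤ ρ * ‖x‖ :=
      mul_le_mul_of_nonneg_right (by rw [← dist_eq_norm, dist_comm]; exact (mem_ball.mp hw).le)
        (norm_nonneg x)
    rw [inner_sub_left] at h1
    linarith [hv x hx]

lemma exists_norm_eq_one_inner_nonpos_of_notMem_interior_dual [FiniteDimensional ℝ E]
    {C : Set E} (hC : IsClosed C) (hcone : ∀ x ∈ C, ∀ t : ℝ, 0 < t → t • x ∈ C) {v : E}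
    (hv : v ∉ interior {y : E | ∀ x ∈ C, 0 ≤ ⟪y, x⟫}) : ∃ u ∈ C, ‖u‖ = 1 ∧ ⟪v, u⟫ ≤ 0 := by
  by_contra! hpos
  obtain ⟨m, hm, hmK⟩ := ((isCompact_sphere (0 : E) 1).inter_left hC).exists_forall_le'
    (f := fun u => ⟪v, u⟫) (by fun_prop) (a := 0)
    fun u hu => hpos u hu.1 (mem_sphere_zero_iff_norm.mp hu.2)
  refine hv (mem_interior_dual_iff.mpr ⟨m, hm, fun x hx => ?_⟩)
  rcases eq_or_ne x 0 with rfl | hx0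
  · simp
  have hxpos := norm_pos_iff.mpr hx0
  have h := hmK (‖x‖⁻¹ • x) ⟨hcone x hx _ (inv_pos.mpr hxpos), by simp [norm_smul, hxpos.ne']⟩
  rwa [real_inner_smul_right, le_inv_mul_iff₀ hxpos, mul_comm] at h

end DualCone

section Polyhedron

variable {E : Type*} [NormedAddCommGroup E] [InnerProductSpace ℝ E] {ι : Type*}

def polyhedron (ν : ι → E) (c : ι → ℝ) : Set E := ⋂ i, {x | c i ≤ ⟪ν i, x⟫}

variable (ν : ι → E) (c : ι → ℝ)

lemma isClosed_polyhedron : IsClosed (polyhedron ν c) :=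
  isClosed_iInter fun _ => isClosed_le continuous_const (by fun_prop)

lemma add_smul_mem_polyhedron {x u : E} (hx : x ∈ polyhedron ν c) (hu : u ∈ polyhedron ν 0)
    {t : ℝ} (ht : 0 ≤ t) : x + t • u ∈ polyhedron ν c := by
  simp only [polyhedron, Set.mem_iInter, Set.mem_ofPred_eq, Pi.zero_apply] at *
  intro i
  rw [inner_add_right, real_inner_smul_right]
  linarith [hx i, mul_nonneg ht (hu i)]

lemma smul_mem_polyhedron_zero {u : E} (hu : u ∈ polyhedron ν 0) {t : ℝ} (ht : 0 ≤ t) :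
    t • u ∈ polyhedron ν 0 := by
  simpa using add_smul_mem_polyhedron ν 0 (x := 0) (by simp [polyhedron]) hu ht

variable [Fintype ι] [FiniteDimensional ℝ E]

lemma exists_mul_norm_le_sum_max_neg_inner {v : E} {ρ : ℝ} (hρ : 0 < ρ)
    (hv : ∀ x ∈ polyhedron ν 0, ρ * ‖x‖ ≤ ⟪v, x⟫) :
    ∃ η > 0, ∀ x, ⟪v, x⟫ ≤ ρ / 2 * ‖x‖ → η * ‖x‖ ≤ ∑ i, max (-⟪ν i, x⟫) 0 := by
  -- `d x` measures how far `x` is from satisfying the inequalities of `polyhedron ν 0`.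
  set d : E → ℝ := fun x => ∑ i, max (-⟪ν i, x⟫) 0
  have hd_smul : ∀ (t : ℝ) x, 0 ≤ t → d (t • x) = t * d x := by
    intro t x ht
    simp only [d, Finset.mul_sum, real_inner_smul_right, mul_max_of_nonneg _ _ ht, mul_zero,
      mul_neg]
  set K := sphere (0 : E) 1 ∩ {u | ⟪v, u⟫ ≤ ρ / 2}
  have hK : IsCompact K :=
    (isCompact_sphere 0 1).inter_right (isClosed_le (by fun_prop) continuous_const)
  have hdK : ∀ u ∈ K, 0 < d u := by
    rintro u ⟨hu1, hu2⟩
    by_contra! hdu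
    have hu : u ∈ polyhedron ν 0 := by
      simp only [polyhedron, Set.mem_iInter, Set.mem_ofPred_eq, Pi.zero_apply]
      intro i
      have := (Finset.single_le_sum (fun j _ => le_max_right (-⟪ν j, u⟫) 0)
        (Finset.mem_univ i)).trans hdu
      linarith [le_max_left (-⟪ν i, u⟫) 0]
    have := hv u hu
    rw [mem_sphere_zero_iff_norm.mp hu1] at this
    linarith [hu2.out]
  obtain ⟨η, hη, hηK⟩ := hK.exists_forall_le' (by fun_prop : Continuous d).continuousOn hdK
  refine ⟨η, hη, fun x hx => ?_⟩
  rcases eq_or_ne x 0 with rfl | hx0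
  · simp
  have hxpos := norm_pos_iff.mpr hx0
  have h := hηK (‖x‖⁻¹ • x) ⟨by simp [norm_smul, hxpos.ne'], by
    rw [Set.mem_ofPred_eq, real_inner_smul_right, inv_mul_le_iff₀ hxpos]; linarith⟩
  rwa [hd_smul _ _ (inv_nonneg.mpr hxpos.le), le_inv_mul_iff₀ hxpos, mul_comm] at h

lemma exists_coercive_of_mem_interior_dual {v : E}
    (hv : v ∈ interior {y : E | ∀ x ∈ polyhedron ν 0, 0 ≤ ⟪y, x⟫}) :
    ∃ δ > 0, ∃ M, ∀ x ∈ polyhedron ν c, δ * ‖x‖ - M ≤ ⟪v, x⟫ := by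
  obtain ⟨ρ, hρ, hρv⟩ := mem_interior_dual_iff.mp hv
  obtain ⟨η, hη, hηv⟩ := exists_mul_norm_le_sum_max_neg_inner ν hρ hρv
  set R := (∑ i, max (-c i) 0) / η
  have hR : 0 ≤ R := div_nonneg (Finset.sum_nonneg fun i _ => le_max_right _ _) hη.le
  refine ⟨ρ / 2, by positivity, (ρ / 2 + ‖v‖) * R, fun x hx => ?_⟩
  have hM : 0 ≤ (ρ / 2 + ‖v‖) * R := by positivity
  by_cases hvx : ⟪v, x⟫ ≤ ρ / 2 * ‖x‖
  · have hsum : ∑ i, max (-⟪ν i, x⟫) 0 ≤ ∑ i, max (-c i) 0 :=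
      Finset.sum_le_sum fun i _ => max_le_max
        (neg_le_neg (by simpa using Set.mem_iInter.mp hx i)) le_rfl
    have hxR : ‖x‖ ≤ R := by rw [le_div_iff₀ hη]; linarith [hηv x hvx]
    have h1 := neg_le_of_abs_le (abs_real_inner_le_norm v x)
    have h2 : (ρ / 2 + ‖v‖) * ‖x‖ ≤ (ρ / 2 + ‖v‖) * R :=
      mul_le_mul_of_nonneg_left hxR (by positivity)
    linarith
  · linarith

end Polyhedron

section WeightedVolume

variable {E : Type*} [NormedAddCommGroup E] [InnerProductSpace ℝ E] [MeasurableSpace E]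
  (μ : Measure E)

noncomputable def weightedVolume (P : Set E) (v : E) : ℝ≥0∞ :=
  ∫⁻ x in P, ENNReal.ofReal (Real.exp (-⟪v, x⟫)) ∂μ

lemma ofReal_exp_mul_measure_le_weightedVolume {P s : Set E} {v : E} {m : ℝ}
    (hs : MeasurableSet s) (hsP : s ⊆ P) (hm : ∀ x ∈ s, m ≤ -⟪v, x⟫) :
    ENNReal.ofReal (Real.exp m) * μ s ≤ weightedVolume μ P v :=
  calc ENNReal.ofReal (Real.exp m) * μ s = ∫⁻ _ in s, ENNReal.ofReal (Real.exp m) ∂μ :=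
        (setLIntegral_const _ _).symm
    _ ≤ ∫⁻ x in s, ENNReal.ofReal (Real.exp (-⟪v, x⟫)) ∂μ :=
        setLIntegral_mono' hs fun x hx => ENNReal.ofReal_le_ofReal (Real.exp_le_exp.mpr (hm x hx))
    _ ≤ weightedVolume μ P v := lintegral_mono_set hsP

variable [BorelSpace E]

lemma integral_exp_neg_inner_eq_toReal_weightedVolume (P : Set E) (v : E) :
    ∫ x in P, Real.exp (-⟪v, x⟫) ∂μ = (weightedVolume μ P v).toReal :=
  integral_eq_lintegral_of_nonneg_ae (ae_of_all _ fun _ => (Real.exp_pos _).le)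
    (by fun_prop : Continuous fun x => Real.exp (-⟪v, x⟫)).aestronglyMeasurable

lemma lowerSemicontinuous_weightedVolume (P : Set E) :
    LowerSemicontinuous (weightedVolume μ P) := by
  refine lowerSemicontinuous_iff_le_liminf.mpr fun v => ?_
  have hcont : ∀ x : E, Continuous fun w : E => ENNReal.ofReal (Real.exp (-⟪w, x⟫)) :=
    fun x => ENNReal.continuous_ofReal.comp (by fun_prop)
  calc weightedVolume μ P v
      = ∫⁻ x in P, liminf (fun w => ENNReal.ofReal (Real.exp (-⟪w, x⟫))) (𝓝 v) ∂μ :=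
        lintegral_congr fun x => ((hcont x).tendsto v).liminf_eq.symm
    _ ≤ _ := lintegral_liminf_le fun w => (ENNReal.continuous_ofReal.comp
        (by fun_prop : Continuous fun x => Real.exp (-⟪w, x⟫))).measurable

variable [μ.IsAddHaarMeasure]

lemma weightedVolume_eq_top {P : Set E} {ε : ℝ} (hε : 0 < ε) (hball : ball 0 ε ⊆ P) {u v : E}
    (hu : ‖u‖ = 1) (hrec : ∀ x ∈ P, ∀ t : ℝ, 0 ≤ t → x + t • u ∈ P) (hvu : ⟪v, u⟫ ≤ 0) :
    weightedVolume μ P v = ⊤ := by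
  set B : ℕ → Set E := fun j => ball ((2 * ε * j) • u) ε
  have hBP : ⋃ j, B j ⊆ P := by
    refine Set.iUnion_subset fun j z hz => ?_
    have := hrec (z - (2 * ε * j) • u) (hball (by simpa [B, dist_eq_norm] using hz)) (2 * ε * j)
      (by positivity)
    rwa [sub_add_cancel] at this
  have hdisj : Pairwise (Function.onFun Disjoint B) := by
    intro j k hjk
    refine ball_disjoint_ball ?_
    have hjk' : (1 : ℝ) ≤ |(j : ℝ) - k| := by
      rcases hjk.lt_or_gt with h | h
      · have : (j : ℝ) + 1 ≤ k := by exact_mod_cast h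
        rw [abs_sub_comm]
        exact le_abs.mpr (Or.inl (by linarith))
      · have : (k : ℝ) + 1 ≤ j := by exact_mod_cast h
        exact le_abs.mpr (Or.inl (by linarith))
    rw [dist_eq_norm, ← sub_smul, norm_smul, hu, mul_one, ← mul_sub, norm_mul,
      Real.norm_of_nonneg (by positivity), Real.norm_eq_abs]
    nlinarith
  have hB : μ (⋃ j, B j) = ⊤ := by
    rw [measure_iUnion hdisj fun j => measurableSet_ball]
    simp only [B, Measure.addHaar_ball_center]
    exact ENNReal.tsum_const_eq_top_of_ne_zero (measure_ball_pos μ 0 hε).ne'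
  have hlow : ∀ z ∈ ⋃ j, B j, -(ε * ‖v‖) ≤ -⟪v, z⟫ := by
    simp only [Set.mem_iUnion]
    rintro z ⟨j, hz⟩
    replace hz : ‖z - (2 * ε * j) • u‖ < ε := by simpa [B, dist_eq_norm] using hz
    have h1 : ⟪v, z⟫ = 2 * ε * j * ⟪v, u⟫ + ⟪v, z - (2 * ε * j) • u⟫ := by
      rw [← real_inner_smul_right, ← inner_add_right, add_sub_cancel]
    have h2 := real_inner_le_norm v (z - (2 * ε * j) • u)
    have h3 : ‖v‖ * ‖z - (2 * ε * j) • u‖ ≤ ‖v‖ * ε :=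
      mul_le_mul_of_nonneg_left hz.le (norm_nonneg v)
    have h4 : 2 * ε * j * ⟪v, u⟫ ≤ 0 := mul_nonpos_of_nonneg_of_nonpos (by positivity) hvu
    linarith
  have := ofReal_exp_mul_measure_le_weightedVolume μ
    (MeasurableSet.iUnion fun j => measurableSet_ball) hBP hlow
  rwa [hB, ENNReal.mul_top (ENNReal.ofReal_pos.mpr (Real.exp_pos _)).ne', top_le_iff] at this

lemma ofReal_exp_mul_measure_ball_le_weightedVolume {P : Set E} {ε : ℝ} (hε : 0 < ε)
    (hball : ball 0 ε ⊆ P) (v : E) :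
    ENNReal.ofReal (Real.exp (ε / 4 * ‖v‖)) * μ (ball 0 (ε / 4)) ≤ weightedVolume μ P v := by
  -- `⟪v, ·⟫` is smallest at `x₀` on `closedBall 0 (ε / 2)`, so it is `≤ -ε ‖v‖ / 4` near `x₀`.
  set x₀ : E := -(ε / 2 * ‖v‖⁻¹) • v
  have hx₀ : ‖x₀‖ ≤ ε / 2 ∧ ⟪v, x₀⟫ = -(ε / 2 * ‖v‖) := by
    rcases eq_or_ne v 0 with rfl | hv
    · simp [x₀]
      linarith
    have hvpos := norm_pos_iff.mpr hv
    refine ⟨le_of_eq ?_, ?_⟩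
    · rw [norm_smul, norm_neg, Real.norm_of_nonneg (by positivity)]
      field_simp
    · rw [real_inner_smul_right, real_inner_self_eq_norm_mul_norm]
      field_simp
  rw [← Measure.addHaar_ball_center μ x₀]
  refine ofReal_exp_mul_measure_le_weightedVolume μ measurableSet_ball (fun z hz => hball ?_)
    fun z hz => ?_
  · rw [mem_ball_zero_iff]
    rw [mem_ball_iff_norm] at hz
    calc ‖z‖ = ‖(z - x₀) + x₀‖ := by rw [sub_add_cancel]
      _ ≤ ‖z - x₀‖ + ‖x₀‖ := norm_add_le _ _
      _ < ε := by linarith [hx₀.1]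
  · have h1 : ⟪v, z⟫ = ⟪v, x₀⟫ + ⟪v, z - x₀⟫ := by rw [← inner_add_right, add_sub_cancel]
    have h2 := real_inner_le_norm v (z - x₀)
    have h3 : ‖v‖ * ‖z - x₀‖ ≤ ‖v‖ * (ε / 4) :=
      mul_le_mul_of_nonneg_left (mem_ball_iff_norm.mp hz).le (norm_nonneg v)
    linarith [hx₀.2]

variable [FiniteDimensional ℝ E]

lemma isBounded_weightedVolume_preimage_Iic {P : Set E} {ε : ℝ} (hε : 0 < ε)
    (hball : ball 0 ε ⊆ P) {B : ℝ≥0∞} (hB : B ≠ ⊤) :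
    Bornology.IsBounded (weightedVolume μ P ⁻¹' Set.Iic B) := by
  set V := μ (ball (0 : E) (ε / 4))
  have hV0 : V ≠ 0 := (measure_ball_pos μ 0 (by positivity)).ne'
  have hBV : B / V ≠ ⊤ := ENNReal.div_ne_top hB hV0
  refine isBounded_iff_forall_norm_le.mpr ⟨4 / ε * (B / V).toReal, fun v hv => ?_⟩
  have h1 : ENNReal.ofReal (Real.exp (ε / 4 * ‖v‖)) ≤ B / V :=
    (ENNReal.le_div_iff_mul_le (Or.inl hV0) (Or.inl measure_ball_lt_top.ne)).mpr
      ((ofReal_exp_mul_measure_ball_le_weightedVolume μ hε hball v).trans hv)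
  have h2 := (ENNReal.ofReal_le_iff_le_toReal hBV).mp h1
  have h3 := Real.add_one_le_exp (ε / 4 * ‖v‖)
  calc ‖v‖ = 4 / ε * (ε / 4 * ‖v‖) := by field_simp
    _ ≤ 4 / ε * (B / V).toReal := by gcongr; linarith

lemma integrableOn_exp_neg_inner {P : Set E} (hP : MeasurableSet P) {v : E} {δ M : ℝ}
    (hδ : 0 < δ) (hbound : ∀ x ∈ P, δ * ‖x‖ - M ≤ ⟪v, x⟫) :
    IntegrableOn (fun x => Real.exp (-⟪v, x⟫)) P μ :=
  ((integrable_exp_neg_mul_norm μ hδ).const_mul _).integrableOn.mono'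
    (by fun_prop : Continuous fun x => Real.exp (-⟪v, x⟫)).aestronglyMeasurable
    ((ae_restrict_iff' hP).mpr (ae_of_all _ fun x hx => norm_exp_neg_inner_le (hbound x hx)))

lemma continuousAt_integral_exp_neg_inner {P : Set E} (hP : MeasurableSet P) {v₀ : E} {δ M : ℝ}
    (hδ : 0 < δ) (hbound : ∀ x ∈ P, δ * ‖x‖ - M ≤ ⟪v₀, x⟫) :
    ContinuousAt (fun v => ∫ x in P, Real.exp (-⟪v, x⟫) ∂μ) v₀ := by
  refine continuousAt_of_dominated (bound := fun x => Real.exp M * Real.exp (-(δ / 2 * ‖x‖)))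
    (Eventually.of_forall fun v =>
      (by fun_prop : Continuous fun x => Real.exp (-⟪v, x⟫)).aestronglyMeasurable)
    ?_ ((integrable_exp_neg_mul_norm μ (half_pos hδ)).const_mul _).integrableOn
    (ae_of_all _ fun x => by fun_prop)
  filter_upwards [ball_mem_nhds v₀ (half_pos hδ)] with v hv
  refine (ae_restrict_iff' hP).mpr (ae_of_all _ fun x hx => norm_exp_neg_inner_le ?_)
  have h1 := real_inner_le_norm (v₀ - v) x
  have h2 : ‖v₀ - v‖ * ‖x‖ ≤ δ / 2 * ‖x‖ :=
    mul_le_mul_of_nonneg_right (by rw [← dist_eq_norm, dist_comm]; exact (mem_ball.mp hv).le)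
      (norm_nonneg x)
  rw [inner_sub_left] at h1
  linarith [hbound x hx]

variable {ι : Type*} [Fintype ι] (ν : ι → E) (c : ι → ℝ)

lemma weightedVolume_polyhedron_ne_top_iff {ε : ℝ} (hε : 0 < ε)
    (hball : ball 0 ε ⊆ polyhedron ν c) {v : E} :
    weightedVolume μ (polyhedron ν c) v ≠ ⊤ ↔
      v ∈ interior {y : E | ∀ x ∈ polyhedron ν 0, 0 ≤ ⟪y, x⟫} := by
  constructor
  · intro hv
    by_contra hvΛ
    obtain ⟨u, hu, hu1, hvu⟩ := exists_norm_eq_one_inner_nonpos_of_notMem_interior_dual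
      (isClosed_polyhedron ν 0) (fun x hx t ht => smul_mem_polyhedron_zero ν hx ht.le) hvΛ
    exact hv (weightedVolume_eq_top μ hε hball hu1
      (fun x hx t ht => add_smul_mem_polyhedron ν c hx hu ht) hvu)
  · intro hv
    obtain ⟨δ, hδ, M, hM⟩ := exists_coercive_of_mem_interior_dual ν c hv
    exact (integrableOn_exp_neg_inner μ (isClosed_polyhedron ν c).measurableSet hδ hM
      ).lintegral_lt_top.ne

lemma continuousOn_integral_exp_neg_inner_polyhedron :
    ContinuousOn (fun v => ∫ x in polyhedron ν c, Real.exp (-⟪v, x⟫) ∂μ)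
      (interior {y : E | ∀ x ∈ polyhedron ν 0, 0 ≤ ⟪y, x⟫}) := fun _ hv =>
  let ⟨_, hδ, _, hM⟩ := exists_coercive_of_mem_interior_dual ν c hv
  (continuousAt_integral_exp_neg_inner μ (isClosed_polyhedron ν c).measurableSet hδ hM
    ).continuousWithinAt

end WeightedVolume

/-- Let `P = ⋂ᵢ {x : ⟪νᵢ,x⟫ ≥ cᵢ}` be a polyhedron in `ℝⁿ` with `0` in its interior,
with asymptotic cone `C = ⋂ᵢ {x : ⟪νᵢ,x⟫ ≥ 0}`, and let `Λ` be the interior of the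
dual cone `C^∨`. Then the weighted volume functional `F(v) = ∫_P e^{−⟪v,x⟫} dx` is a
proper map on `Λ`: it is continuous on `Λ` and the preimage of every compact subset of
`ℝ` is compact. -/
theorem stmt_14 (n r : ℕ) (ν : Fin r → EuclideanSpace ℝ (Fin n)) (c : Fin r → ℝ)
    (P C : Set (EuclideanSpace ℝ (Fin n)))
    (hP : P = ⋂ i, {x : EuclideanSpace ℝ (Fin n) | c i ≤ ⟪ν i, x⟫})
    (hC : C = ⋂ i, {x : EuclideanSpace ℝ (Fin n) | 0 ≤ ⟪ν i, x⟫})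
    (h0 : (0 : EuclideanSpace ℝ (Fin n)) ∈ interior P)
    (Λ : Set (EuclideanSpace ℝ (Fin n)))
    (hΛ : Λ = interior {y : EuclideanSpace ℝ (Fin n) | ∀ x ∈ C, 0 ≤ ⟪y, x⟫})
    (F : EuclideanSpace ℝ (Fin n) → ℝ)
    (hF : ∀ v, F v = ∫ x in P, Real.exp (-⟪v, x⟫)) :
    ContinuousOn F Λ ∧ ∀ K : Set ℝ, IsCompact K → IsCompact {v ∈ Λ | F v ∈ K} := by
  have hPpoly : P = polyhedron ν c := hP
  have hCpoly : C = polyhedron ν 0 := hC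
  subst hPpoly hCpoly
  obtain ⟨ε, hε, hball⟩ := Metric.mem_nhds_iff.mp (mem_interior_iff_mem_nhds.mp h0)
  have hfin : ∀ v, weightedVolume volume (polyhedron ν c) v ≠ ⊤ ↔ v ∈ Λ := fun v =>
    hΛ ▸ weightedVolume_polyhedron_ne_top_iff volume ν c hε hball
  have hcont : ContinuousOn F Λ := by
    rw [funext hF, hΛ]
    exact continuousOn_integral_exp_neg_inner_polyhedron volume ν c
  refine ⟨hcont, fun K hK => ?_⟩
  obtain ⟨b, hb⟩ := hK.bddAbove
  set A := weightedVolume volume (polyhedron ν c) ⁻¹' Set.Iic (ENNReal.ofReal b)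
  have hAΛ : A ⊆ Λ := fun v hv => (hfin v).mp (ne_top_of_le_ne_top ENNReal.ofReal_ne_top hv)
  have hA : IsClosed A := (lowerSemicontinuous_weightedVolume volume _).isClosed_preimage _
  have hS : {v ∈ Λ | F v ∈ K} = A ∩ F ⁻¹' K := by
    ext v
    refine ⟨fun ⟨hv, hvK⟩ => ⟨?_, hvK⟩, fun ⟨hvA, hvK⟩ => ⟨hAΛ hvA, hvK⟩⟩
    rw [Set.mem_preimage, Set.mem_Iic, ← ENNReal.ofReal_toReal ((hfin v).mpr hv),
      ← integral_exp_neg_inner_eq_toReal_weightedVolume, ← hF]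
    exact ENNReal.ofReal_le_ofReal (hb hvK)
  rw [hS]
  exact (isCompact_of_isClosed_isBounded hA (isBounded_weightedVolume_preimage_Iic volume hε hball
    ENNReal.ofReal_ne_top)).of_isClosed_subset
    ((hcont.mono hAΛ).preimage_isClosed_of_isClosed hA hK.isClosed) Set.inter_subset_left
end
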